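/- arXiv:math/0609764 — 6 statements merged into one kernel-verified Lean document; each statement's English description precedes it below -/
import Mathlib

section
/- The maps π° ↦ I(π°) (sending a decorated permutation to its sequence of shifted anti-exceedance sets) and I ↦ π°(I) (constructing a decorated permutation from a Grassmann necklace) are mutually inverse, giving a bijection between decorated permutations of size n and Grassmann necklaces of size n. -/
/-- A decorated permutation of size `n`: a permutation of `Fin n` together with a coloring
of its fixed points in two colors (`true` = black = 1, `false` = white = -1). -/
structure DecoratedPerm (n : ℕ) where
  perm : Equiv.Perm (Fin n)
  col : {i : Fin n // perm i = i} → Bool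

/-- The position of `i` in the cyclically shifted linear order
`r <_r r+1 <_r ⋯ <_r n-1 <_r 0 <_r ⋯ <_r r-1` on `Fin n`. -/
def shiftVal (n : ℕ) (r i : Fin n) : ℕ := ((i : ℕ) + n - (r : ℕ)) % n

open Classical in
/-- The sequence of shifted anti-exceedance sets of a decorated permutation:
`I_r(π°) = { i | i <_r π⁻¹(i), or π(i) = i and i is colored white }`. -/
noncomputable def necklaceOf {n : ℕ} (σ : DecoratedPerm n) : Fin n → Finset (Fin n) :=
  fun r => Finset.univ.filter fun i =>
    shiftVal n r i < shiftVal n r (σ.perm.symm i) ∨ ∃ h : σ.perm i = i, σ.col ⟨i, h⟩ = false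

/-- A Grassmann necklace: a sequence `(I_0, …, I_{n-1})` of subsets of `Fin n` such that
(indices mod `n`) if `i ∈ I_i` then `I_{i+1} = (I_i \ {i}) ∪ {j}` for some `j`, and if
`i ∉ I_i` then `I_{i+1} = I_i`. -/
def IsGrassmannNecklace {n : ℕ} [NeZero n] (I : Fin n → Finset (Fin n)) : Prop :=
  ∀ i : Fin n, (i ∈ I i → ∃ j : Fin n, I (i + 1) = insert j ((I i).erase i)) ∧
    (i ∉ I i → I (i + 1) = I i)

/-- The decorated permutation `π°(I)` constructed from a Grassmann necklace `I`:
`π(i) = j` if `I_{i+1} = (I_i \ {i}) ∪ {j}` with `j ≠ i`; `π(i) = i` colored black if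
`I_{i+1} = I_i` and `i ∉ I_i`; `π(i) = i` colored white if `I_{i+1} = I_i` and `i ∈ I_i`. -/
def DecodesTo {n : ℕ} [NeZero n] (I : Fin n → Finset (Fin n)) (σ : DecoratedPerm n) : Prop :=
  ∀ i : Fin n,
    if h : σ.perm i = i then
      I (i + 1) = I i ∧ (σ.col ⟨i, h⟩ = false ↔ i ∈ I i)
    else I (i + 1) = insert (σ.perm i) ((I i).erase i)

/-!
Reading `I_r(π°)` for consecutive `r`, only two elements change status between `I_r` and
`I_{r+1}`: `r` leaves (unless it is a fixed point) and `π(r)` enters, because the shifted order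
`<_{r+1}` is `<_r` with `r` moved from the bottom to the top. So `I(π°)` is a necklace decoding
to `π°`, `π°` is recovered from `I(π°)` as the sequence of entering elements, and a decoding
sequence is determined by its decorated permutation through this local rule.

Conversely, in a Grassmann necklace an element `k` can only leave at step `k`; as `k` enters
and leaves equally often around the cycle, it enters at most once, and only if it leaves at
step `k`. This makes the map `i ↦ (the element entering at step i)` injective, hence a
permutation, and the necklace decodes to it.
-/

open Finset

section Cyclic

variable {α : Type*} [Fintype α]

theorem Equiv.Perm.card_filter_comp_and_not_comm (e : Equiv.Perm α) (p : α → Prop)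
    [DecidablePred p] : #{r | p (e r) ∧ ¬p r} = #{r | p r ∧ ¬p (e r)} := by
  have hsum : ∑ r, (if p (e r) then 1 else 0 : ℕ) = ∑ r, if p r then 1 else 0 :=
    Equiv.sum_comp e fun r => if p r then 1 else 0
  have hpt : ∀ r, ((if p (e r) ∧ ¬p r then 1 else 0 : ℕ) + if p r then 1 else 0) =
      (if p r ∧ ¬p (e r) then 1 else 0) + if p (e r) then 1 else 0 := by
    intro r
    by_cases p r <;> by_cases p (e r) <;> simp [*]
  have htotal := sum_congr rfl fun r (_ : r ∈ univ) => hpt r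
  rw [sum_add_distrib, sum_add_distrib, hsum] at htotal
  simp only [card_filter]
  omega

theorem Equiv.Perm.comp_eq_of_forall_comp_le (e : Equiv.Perm α) {g : α → ℕ}
    (h : ∀ r, g (e r) ≤ g r) (r : α) : g (e r) = g r :=
  (sum_eq_sum_iff_of_le fun r _ => h r).1 (Equiv.sum_comp e g) r (mem_univ r)

theorem Fin.card_filter_add_one_and_not_comm {n : ℕ} [NeZero n] (p : Fin n → Prop)
    [DecidablePred p] : #{r | p (r + 1) ∧ ¬p r} = #{r | p r ∧ ¬p (r + 1)} :=
  (Equiv.addRight (1 : Fin n)).card_filter_comp_and_not_comm p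

theorem Fin.induction_add_one {n : ℕ} [NeZero n] {P : Fin n → Prop} (a : Fin n) (ha : P a)
    (hstep : ∀ r, P r → P (r + 1)) (r : Fin n) : P r := by
  open Fin.NatCast Fin.CommRing in
  have hP : ∀ m : ℕ, P (a + m) := by
    intro m
    induction m with
    | zero => simpa using ha
    | succ m ih => simpa [add_assoc] using hstep _ ih
  simpa using hP (r - a : Fin n)

end Cyclic

section ShiftVal

variable {n : ℕ}

theorem shiftVal_eq_ite (r i : Fin n) :
    shiftVal n r i = if (r : ℕ) ≤ i then (i : ℕ) - r else (i : ℕ) + n - r := by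
  have hi := i.isLt
  unfold shiftVal
  split_ifs with h
  · rw [show (i : ℕ) + n - r = (i - r) + n by omega, Nat.add_mod_right,
      Nat.mod_eq_of_lt (by omega)]
  · exact Nat.mod_eq_of_lt (by omega)

theorem Fin.val_add_one_eq_ite [NeZero n] (r : Fin n) :
    ((r + 1 : Fin n) : ℕ) = if (r : ℕ) + 1 = n then 0 else (r : ℕ) + 1 := by
  rw [Fin.val_add, Fin.val_one', Nat.add_mod_mod]
  split_ifs with h
  · rw [h, Nat.mod_self]
  · exact Nat.mod_eq_of_lt (by omega)

theorem shiftVal_self (r : Fin n) : shiftVal n r r = 0 := by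
  simp [shiftVal_eq_ite]

theorem shiftVal_lt (r i : Fin n) : shiftVal n r i < n := by
  rw [shiftVal_eq_ite]
  split_ifs <;> omega

theorem shiftVal_pos {r i : Fin n} (h : i ≠ r) : 0 < shiftVal n r i := by
  rw [shiftVal_eq_ite]
  split_ifs <;> omega

theorem shiftVal_add_one_self [NeZero n] (r : Fin n) : shiftVal n (r + 1) r = n - 1 := by
  rw [shiftVal_eq_ite, Fin.val_add_one_eq_ite]
  split_ifs <;> omega

theorem shiftVal_add_one_add_one [NeZero n] {r i : Fin n} (h : i ≠ r) :
    shiftVal n (r + 1) i + 1 = shiftVal n r i := by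
  rw [shiftVal_eq_ite, shiftVal_eq_ite, Fin.val_add_one_eq_ite]
  split_ifs <;> omega

end ShiftVal

section NecklaceOf

variable {n : ℕ} {σ : DecoratedPerm n} {i j : Fin n}

theorem mem_necklaceOf {r : Fin n} :
    j ∈ necklaceOf σ r ↔ shiftVal n r j < shiftVal n r (σ.perm.symm j) ∨
      ∃ h : σ.perm j = j, σ.col ⟨j, h⟩ = false := by
  simp [necklaceOf]

theorem mem_necklaceOf_of_apply_eq (h : σ.perm i = i) (r : Fin n) :
    i ∈ necklaceOf σ r ↔ σ.col ⟨i, h⟩ = false := by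
  have hsymm : σ.perm.symm i = i := σ.perm.symm_apply_eq.2 h.symm
  simp [mem_necklaceOf, hsymm, h]

theorem self_mem_necklaceOf_self (h : σ.perm i ≠ i) : i ∈ necklaceOf σ i := by
  refine mem_necklaceOf.2 (Or.inl ?_)
  rw [shiftVal_self]
  exact shiftVal_pos (by rwa [Ne, Equiv.symm_apply_eq, eq_comm])

theorem apply_notMem_necklaceOf_self (h : σ.perm i ≠ i) : σ.perm i ∉ necklaceOf σ i := by
  rw [mem_necklaceOf, Equiv.symm_apply_apply, shiftVal_self]
  rintro (hlt | ⟨hfix, -⟩)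
  · exact Nat.not_lt_zero _ hlt
  · exact h (σ.perm.injective hfix)

variable [NeZero n]

theorem self_notMem_necklaceOf_add_one (h : σ.perm i ≠ i) : i ∉ necklaceOf σ (i + 1) := by
  have hsymm : σ.perm.symm i ≠ i := by rwa [Ne, Equiv.symm_apply_eq, eq_comm]
  rw [mem_necklaceOf, shiftVal_add_one_self]
  rintro (hlt | ⟨hfix, -⟩)
  · have := shiftVal_add_one_add_one hsymm
    have := shiftVal_lt i (σ.perm.symm i)
    omega
  · exact h hfix

theorem apply_mem_necklaceOf_add_one (h : σ.perm i ≠ i) : σ.perm i ∈ necklaceOf σ (i + 1) := by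
  refine mem_necklaceOf.2 (Or.inl ?_)
  rw [Equiv.symm_apply_apply, shiftVal_add_one_self]
  have := shiftVal_add_one_add_one h
  have := shiftVal_lt i (σ.perm i)
  omega

theorem mem_necklaceOf_add_one_iff (hj : j ≠ i) (hj' : σ.perm.symm j ≠ i) :
    j ∈ necklaceOf σ (i + 1) ↔ j ∈ necklaceOf σ i := by
  have := shiftVal_add_one_add_one hj
  have := shiftVal_add_one_add_one hj'
  have hlt : shiftVal n (i + 1) j < shiftVal n (i + 1) (σ.perm.symm j) ↔
      shiftVal n i j < shiftVal n i (σ.perm.symm j) := by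
    omega
  simp only [mem_necklaceOf, hlt]

theorem necklaceOf_add_one_of_apply_eq (h : σ.perm i = i) :
    necklaceOf σ (i + 1) = necklaceOf σ i := by
  ext j
  by_cases hj : j = i
  · subst hj
    rw [mem_necklaceOf_of_apply_eq h, mem_necklaceOf_of_apply_eq h]
  · exact mem_necklaceOf_add_one_iff hj (by rwa [Ne, Equiv.symm_apply_eq, h])

theorem necklaceOf_add_one_of_apply_ne (h : σ.perm i ≠ i) :
    necklaceOf σ (i + 1) = insert (σ.perm i) ((necklaceOf σ i).erase i) := by
  ext j
  rw [mem_insert, mem_erase]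
  by_cases hji : j = i
  · subst hji
    simp [self_notMem_necklaceOf_add_one h, Ne.symm h]
  by_cases hjπ : j = σ.perm i
  · subst hjπ
    simp [apply_mem_necklaceOf_add_one h]
  rw [mem_necklaceOf_add_one_iff hji (by rwa [Ne, Equiv.symm_apply_eq])]
  simp [hji, hjπ]

theorem decodesTo_necklaceOf (σ : DecoratedPerm n) : DecodesTo (necklaceOf σ) σ := by
  intro i
  split_ifs with h
  · exact ⟨necklaceOf_add_one_of_apply_eq h, (mem_necklaceOf_of_apply_eq h i).symm⟩
  · exact necklaceOf_add_one_of_apply_ne h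

theorem isGrassmannNecklace_necklaceOf (σ : DecoratedPerm n) :
    IsGrassmannNecklace (necklaceOf σ) := by
  intro i
  by_cases h : σ.perm i = i
  · refine ⟨fun hi => ⟨i, ?_⟩, fun _ => necklaceOf_add_one_of_apply_eq h⟩
    rw [necklaceOf_add_one_of_apply_eq h, insert_erase hi]
  · exact ⟨fun _ => ⟨σ.perm i, necklaceOf_add_one_of_apply_ne h⟩,
      fun hi => absurd (self_mem_necklaceOf_self h) hi⟩

theorem necklaceOf_add_one_sdiff (σ : DecoratedPerm n) (i : Fin n) :
    necklaceOf σ (i + 1) \ necklaceOf σ i = if σ.perm i = i then ∅ else {σ.perm i} := by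
  split_ifs with h
  · rw [necklaceOf_add_one_of_apply_eq h, Finset.sdiff_self]
  · rw [necklaceOf_add_one_of_apply_ne h,
      insert_sdiff_of_notMem _ (apply_notMem_necklaceOf_self h),
      sdiff_eq_empty_iff_subset.2 (erase_subset _ _), insert_empty]

theorem necklaceOf_injective : Function.Injective (necklaceOf (n := n)) := by
  intro σ τ hστ
  have hperm : σ.perm = τ.perm := by
    ext1 i
    have hsdiff := necklaceOf_add_one_sdiff σ i
    rw [hστ, necklaceOf_add_one_sdiff] at hsdiff
    split_ifs at hsdiff <;> simp_all
  obtain ⟨π, c⟩ := σ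
  obtain ⟨π', c'⟩ := τ
  obtain rfl : π = π' := hperm
  congr
  funext ⟨i, hi⟩
  have hcol := (mem_necklaceOf_of_apply_eq (σ := ⟨π, c⟩) hi i).symm.trans
    (hστ ▸ mem_necklaceOf_of_apply_eq (σ := ⟨π, c'⟩) hi i)
  exact Bool.eq_iff_iff.2 (by simpa using hcol.not)

end NecklaceOf

section Decoding

variable {n : ℕ} [NeZero n] {I I' : Fin n → Finset (Fin n)} {σ : DecoratedPerm n}

theorem DecodesTo.left_unique (hd : DecodesTo I σ) (hd' : DecodesTo I' σ) : I = I' := by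
  funext r
  ext k
  revert r
  have hstep : ∀ r, (k ∈ I r ↔ k ∈ I' r) → (k ∈ I (r + 1) ↔ k ∈ I' (r + 1)) := by
    intro r hr
    have h := hd r
    have h' := hd' r
    split_ifs at h h'
    · rw [h.1, h'.1, hr]
    · rw [h, h', mem_insert, mem_insert, mem_erase, mem_erase, hr]
  have h := hd k
  have h' := hd' k
  by_cases hk : σ.perm k = k
  · rw [dif_pos hk] at h h'
    exact Fin.induction_add_one k (h.2.symm.trans h'.2) hstep
  · rw [dif_neg hk] at h h'
    exact Fin.induction_add_one (k + 1) (by simp [h, h', Ne.symm hk]) hstep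

theorem DecodesTo.necklaceOf_eq (hd : DecodesTo I σ) : necklaceOf σ = I :=
  (decodesTo_necklaceOf σ).left_unique hd

end Decoding

namespace IsGrassmannNecklace

variable {n : ℕ} [NeZero n] {I : Fin n → Finset (Fin n)}

theorem mem_add_one_of_mem (hI : IsGrassmannNecklace I) {r k : Fin n} (hk : k ∈ I r)
    (hkr : k ≠ r) : k ∈ I (r + 1) := by
  by_cases hr : r ∈ I r
  · obtain ⟨j, hj⟩ := (hI r).1 hr
    rw [hj]
    exact mem_insert_of_mem (mem_erase.2 ⟨hkr, hk⟩)
  · rwa [(hI r).2 hr]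

theorem card_add_one (hI : IsGrassmannNecklace I) (r : Fin n) : #(I (r + 1)) = #(I r) := by
  refine (Equiv.addRight (1 : Fin n)).comp_eq_of_forall_comp_le (g := fun r => #(I r)) ?_ r
  intro r
  by_cases hr : r ∈ I r
  · obtain ⟨j, hj⟩ := (hI r).1 hr
    calc #(I (r + 1)) ≤ #((I r).erase r) + 1 := hj ▸ card_insert_le _ _
      _ = #(I r) := card_erase_add_one hr
  · exact (congrArg card ((hI r).2 hr)).le

theorem filter_mem_and_notMem_add_one_subset (hI : IsGrassmannNecklace I) (k : Fin n) :
    ({r | k ∈ I r ∧ k ∉ I (r + 1)} : Finset (Fin n)) ⊆ {k} := fun r hr => by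
  simp only [mem_filter, mem_univ, true_and] at hr
  by_contra hrk
  exact hr.2 (hI.mem_add_one_of_mem hr.1 (Ne.symm (mem_singleton.not.1 hrk)))

theorem card_filter_mem_add_one_and_notMem_le_one (hI : IsGrassmannNecklace I) (k : Fin n) :
    #({r | k ∈ I (r + 1) ∧ k ∉ I r} : Finset (Fin n)) ≤ 1 := by
  rw [Fin.card_filter_add_one_and_not_comm (fun r => k ∈ I r)]
  exact (card_le_card (hI.filter_mem_and_notMem_add_one_subset k)).trans (card_singleton k).le

theorem eq_of_mem_sdiff (hI : IsGrassmannNecklace I) {k a b : Fin n}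
    (ha : k ∈ I (a + 1) \ I a) (hb : k ∈ I (b + 1) \ I b) : a = b :=
  card_le_one.1 (hI.card_filter_mem_add_one_and_notMem_le_one k) a (by simpa using ha) b
    (by simpa using hb)

theorem mem_sdiff_self_of_mem_sdiff (hI : IsGrassmannNecklace I) {k a : Fin n}
    (ha : k ∈ I (a + 1) \ I a) : k ∈ I k \ I (k + 1) := by
  have hleave : ({r | k ∈ I r ∧ k ∉ I (r + 1)} : Finset (Fin n)).Nonempty := by
    rw [← card_pos, ← Fin.card_filter_add_one_and_not_comm (fun r => k ∈ I r), card_pos]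
    exact ⟨a, by simpa using ha⟩
  obtain ⟨r, hr⟩ := hleave
  obtain rfl := mem_singleton.1 (hI.filter_mem_and_notMem_add_one_subset k hr)
  simpa using hr

theorem exists_step (hI : IsGrassmannNecklace I) (i : Fin n) :
    ∃ j, if j = i then I (i + 1) = I i else j ∉ I i ∧ I (i + 1) = insert j ((I i).erase i) := by
  by_cases hi : i ∈ I i
  · obtain ⟨j, hj⟩ := (hI i).1 hi
    refine ⟨j, ?_⟩
    split_ifs with hji
    · rw [hj, hji, insert_erase hi]
    · refine ⟨fun hjI => ?_, hj⟩
      have hcard := hI.card_add_one i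
      rw [hj, insert_eq_of_mem (mem_erase.2 ⟨hji, hjI⟩), card_erase_of_mem hi] at hcard
      have := card_pos.2 ⟨i, hi⟩
      omega
  · exact ⟨i, by simpa using (hI i).2 hi⟩

theorem injective_of_step (hI : IsGrassmannNecklace I) {f : Fin n → Fin n}
    (hf : ∀ i, if f i = i then I (i + 1) = I i
      else f i ∉ I i ∧ I (i + 1) = insert (f i) ((I i).erase i)) :
    Function.Injective f := by
  have mem_sdiff_of_apply_ne : ∀ i, f i ≠ i → f i ∈ I (i + 1) \ I i := fun i hi => by
    have hfi := hf i
    rw [if_neg hi] at hfi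
    rw [hfi.2]
    exact mem_sdiff.2 ⟨mem_insert_self _ _, hfi.1⟩
  -- a fixed point `a` of `f` never leaves, so it can never enter either
  have ne_of_apply_eq_of_apply_ne : ∀ a b, f a = a → f b ≠ b → f a ≠ f b := by
    intro a b ha hb hab
    have hleave := hI.mem_sdiff_self_of_mem_sdiff (ha ▸ hab ▸ mem_sdiff_of_apply_ne b hb)
    have hfa := hf a
    rw [if_pos ha] at hfa
    rw [hfa, Finset.sdiff_self] at hleave
    exact notMem_empty a hleave
  intro a b hab
  by_cases ha : f a = a <;> by_cases hb : f b = b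
  · rw [← ha, hab, hb]
  · exact absurd hab (ne_of_apply_eq_of_apply_ne a b ha hb)
  · exact absurd hab.symm (ne_of_apply_eq_of_apply_ne b a hb ha)
  · exact hI.eq_of_mem_sdiff (mem_sdiff_of_apply_ne a ha) (hab ▸ mem_sdiff_of_apply_ne b hb)

theorem exists_decodesTo (hI : IsGrassmannNecklace I) : ∃ σ, DecodesTo I σ := by
  choose f hf using hI.exists_step
  refine ⟨⟨Equiv.ofBijective f (Finite.injective_iff_bijective.1 (hI.injective_of_step hf)),
    fun i => decide (i.1 ∉ I i.1)⟩, fun i => ?_⟩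
  have hfi := hf i
  simp only [Equiv.ofBijective_apply]
  split_ifs at hfi ⊢ with h
  · exact ⟨hfi, by simp⟩
  · exact hfi.2

end IsGrassmannNecklace

/-- The maps `π° ↦ I(π°)` and `I ↦ π°(I)` are mutually inverse, giving a bijection between
decorated permutations of size `n` and Grassmann necklaces of size `n`. -/
theorem decoratedPerm_grassmannNecklace_bijection (n : ℕ) [NeZero n] :
    (∀ σ : DecoratedPerm n,
      IsGrassmannNecklace (necklaceOf σ) ∧ DecodesTo (necklaceOf σ) σ) ∧
    (∀ I : Fin n → Finset (Fin n), IsGrassmannNecklace I →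
      ∃! σ : DecoratedPerm n, DecodesTo I σ) ∧
    (∀ (I : Fin n → Finset (Fin n)) (σ : DecoratedPerm n),
      IsGrassmannNecklace I → DecodesTo I σ → necklaceOf σ = I) := by
  refine ⟨fun σ => ⟨isGrassmannNecklace_necklaceOf σ, decodesTo_necklaceOf σ⟩,
    fun I hI => ?_, fun I σ _ hd => hd.necklaceOf_eq⟩
  obtain ⟨σ, hσ⟩ := hI.exists_decodesTo
  exact ⟨σ, hσ, fun τ hτ => necklaceOf_injective (hτ.necklaceOf_eq.trans hσ.necklaceOf_eq.symm)⟩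
end

section
/- With notation as in the previous context, define B := L − LXL + LXLXL − ... and A := U + UXU + UXUXU + ..., where L is the strictly lower-triangular all-ones matrix. Then the entries satisfy b_{ij} = (a_{1j} · a_{im} − a_{1m} · a_{ij}) · a_{1m}^{-1} for all i, j ∈ {1,...,m}, where a_{1m} is invertible in the ring of formal power series. -/
/-- The upper-triangular all-ones `s × s` matrix `U = Σ_{i ≤ j} E_{ij}` over the ring of
formal power series in variables `x_{ij}`. -/
noncomputable def Umat (s : ℕ) : Matrix (Fin s) (Fin s) (MvPowerSeries (Fin s × Fin s) ℤ) :=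
  Matrix.of fun i j => if i ≤ j then 1 else 0

/-- The strictly lower-triangular all-ones matrix `L = Σ_{i > j} E_{ij}`. -/
noncomputable def Lmat (s : ℕ) : Matrix (Fin s) (Fin s) (MvPowerSeries (Fin s × Fin s) ℤ) :=
  Matrix.of fun i j => if j < i then 1 else 0

/-- The matrix `X = (x_{ij})` of formal power series variables. -/
noncomputable def Xmat (s : ℕ) : Matrix (Fin s) (Fin s) (MvPowerSeries (Fin s × Fin s) ℤ) :=
  Matrix.of fun i j => MvPowerSeries.X (i, j)

/-- `A := U + UXU + UXUXU + ⋯ = U (1 - XU)⁻¹`. -/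
noncomputable def Amat (s : ℕ) : Matrix (Fin s) (Fin s) (MvPowerSeries (Fin s × Fin s) ℤ) :=
  Umat s * (1 - Xmat s * Umat s)⁻¹

/-- `B := L - LXL + LXLXL - ⋯ = L (1 + XL)⁻¹`. -/
noncomputable def Bmat (s : ℕ) : Matrix (Fin s) (Fin s) (MvPowerSeries (Fin s × Fin s) ℤ) :=
  Lmat s * (1 + Xmat s * Lmat s)⁻¹

/-!
Since `L + U` is the all-ones matrix `J` and `A = U + AXU`, one gets
`A (1 + XL) = A + AXJ - AXU = U + AXJ`, and `AXJ` has constant rows: reading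
`A = U + AXU` in the last column, where `U` is all ones, row `i` of `AXJ` is `a_{im} - 1`.
Hence the matrix `K_{ij} = a_{1j} a_{im} - a_{1m} a_{ij}` satisfies `K (1 + XL) = a_{1m} L`,
and cancelling the invertible `1 + XL` against `B (1 + XL) = L` gives `a_{1m} B = K`.
-/

namespace Matrix

variable {R n : Type*} [CommRing R] [Fintype n] [DecidableEq n] {U L X A : Matrix n n R}

theorem mul_one_add_mul_apply_of_add_eq_one (hA : A * (1 - X * U) = U)
    (hLU : ∀ i j, L i j + U i j = 1) {l : n} (hl : ∀ k, U k l = 1) (i j : n) :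
    (A * (1 + X * L)) i j = U i j + (A i l - 1) := by
  have hA' : A = U + A * X * U := by
    rw [mul_sub, mul_one, ← mul_assoc, sub_eq_iff_eq_add] at hA
    exact hA
  have hAXU (j : n) : (A * X * U) i j = A i j - U i j := by
    nth_rw 2 [hA']
    rw [add_apply]
    ring
  have hrow : (A * X * L) i j + (A * X * U) i j = ∑ k, (A * X) i k := by
    simp only [mul_apply (M := A * X), ← Finset.sum_add_distrib, ← mul_add, hLU, mul_one]
  have hAXJ : ∑ k, (A * X) i k = A i l - 1 := by
    have h := hAXU l
    rw [mul_apply, hl i] at h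
    simpa only [hl, mul_one] using h
  rw [mul_add, mul_one, add_apply, ← mul_assoc]
  linear_combination hrow + hAXJ - hAXU j

theorem of_mul_one_add_mul_eq_smul (hA : A * (1 - X * U) = U)
    (hLU : ∀ i j, L i j + U i j = 1) {f l : n} (hf : ∀ k, U f k = 1) (hl : ∀ k, U k l = 1) :
    (of fun i j => A f j * A i l - A f l * A i j) * (1 + X * L) = A f l • L := by
  ext i j
  have hAM := mul_one_add_mul_apply_of_add_eq_one hA hLU hl
  calc ((of fun i j => A f j * A i l - A f l * A i j) * (1 + X * L)) i j
      = A i l * (A * (1 + X * L)) f j - A f l * (A * (1 + X * L)) i j := by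
        simp only [mul_apply, of_apply, Finset.mul_sum, ← Finset.sum_sub_distrib]
        exact Finset.sum_congr rfl fun k _ => by ring
    _ = A f l * L i j := by
        rw [hAM, hAM, hf]
        linear_combination -(A f l) * hLU i j
    _ = (A f l • L) i j := rfl

end Matrix

namespace MvPowerSeries

theorem isUnit_det_of_map_constantCoeff_eq_one {σ R n : Type*} [CommRing R] [Fintype n]
    [DecidableEq n] {M : Matrix n n (MvPowerSeries σ R)} (h : M.map constantCoeff = 1) :
    IsUnit M.det := by
  rw [isUnit_iff_constantCoeff, RingHom.map_det, RingHom.mapMatrix_apply, h, Matrix.det_one]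
  exact isUnit_one

end MvPowerSeries

open MvPowerSeries

variable {s : ℕ}

theorem Xmat_map_constantCoeff : (Xmat s).map constantCoeff = 0 := by
  ext i j
  simp [Xmat]

theorem map_constantCoeff_one_sub_Xmat_mul (N : Matrix (Fin s) (Fin s) _) :
    (1 - Xmat s * N).map constantCoeff = 1 := by
  rw [← RingHom.mapMatrix_apply, map_sub, map_one, map_mul, RingHom.mapMatrix_apply,
    Xmat_map_constantCoeff, zero_mul, sub_zero]

theorem map_constantCoeff_one_add_Xmat_mul (N : Matrix (Fin s) (Fin s) _) :
    (1 + Xmat s * N).map constantCoeff = 1 := by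
  rw [← RingHom.mapMatrix_apply, map_add, map_one, map_mul, RingHom.mapMatrix_apply,
    Xmat_map_constantCoeff, zero_mul, add_zero]

theorem Amat_mul_one_sub_Xmat_mul_Umat : Amat s * (1 - Xmat s * Umat s) = Umat s :=
  Matrix.nonsing_inv_mul_cancel_right _ _
    (isUnit_det_of_map_constantCoeff_eq_one (map_constantCoeff_one_sub_Xmat_mul _))

theorem Bmat_mul_one_add_Xmat_mul_Lmat : Bmat s * (1 + Xmat s * Lmat s) = Lmat s :=
  Matrix.nonsing_inv_mul_cancel_right _ _
    (isUnit_det_of_map_constantCoeff_eq_one (map_constantCoeff_one_add_Xmat_mul _))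

theorem Lmat_add_Umat_apply (i j : Fin s) : Lmat s i j + Umat s i j = 1 := by
  by_cases h : j < i <;> simp [Lmat, Umat, h, not_lt.mp]

theorem Umat_zero_apply (j : Fin (s + 1)) : Umat (s + 1) 0 j = 1 := by
  simp [Umat]

theorem Umat_apply_last (i : Fin (s + 1)) : Umat (s + 1) i (Fin.last s) = 1 := by
  simp [Umat, Fin.le_last]

theorem Amat_map_constantCoeff : (Amat s).map constantCoeff = (Umat s).map constantCoeff := by
  simpa [map_constantCoeff_one_sub_Xmat_mul] using
    congrArg (RingHom.mapMatrix constantCoeff) (Amat_mul_one_sub_Xmat_mul_Umat (s := s))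

theorem isUnit_Amat_zero_last : IsUnit (Amat (s + 1) 0 (Fin.last s)) := by
  rw [isUnit_iff_constantCoeff, ← Matrix.map_apply (f := constantCoeff), Amat_map_constantCoeff,
    Matrix.map_apply, Umat_zero_apply, map_one]
  exact isUnit_one

/-- With `A = U + UXU + ⋯` and `B = L - LXL + ⋯` (matrices of size `m+1`, rows/columns
indexed `1, …, m` by `0, …, Fin.last m`), the entry `a_{1m}` is invertible in the ring of
formal power series and `b_{ij} = (a_{1j} a_{im} - a_{1m} a_{ij}) a_{1m}⁻¹` for all `i, j`. -/
theorem b_entries_from_a_entries (m : ℕ) :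
    IsUnit (Amat (m + 1) 0 (Fin.last m)) ∧
    ∀ i j : Fin (m + 1),
      Bmat (m + 1) i j =
        (Amat (m + 1) 0 j * Amat (m + 1) i (Fin.last m)
          - Amat (m + 1) 0 (Fin.last m) * Amat (m + 1) i j) *
        Ring.inverse (Amat (m + 1) 0 (Fin.last m)) := by
  set a := Amat (m + 1) 0 (Fin.last m)
  have ha : IsUnit a := isUnit_Amat_zero_last
  have hM : IsUnit (1 + Xmat (m + 1) * Lmat (m + 1)) :=
    (Matrix.isUnit_iff_isUnit_det _).mpr
      (isUnit_det_of_map_constantCoeff_eq_one (map_constantCoeff_one_add_Xmat_mul _))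
  have hK := Matrix.of_mul_one_add_mul_eq_smul (Amat_mul_one_sub_Xmat_mul_Umat (s := m + 1))
    Lmat_add_Umat_apply Umat_zero_apply Umat_apply_last
  have hB : Bmat (m + 1) = Ring.inverse a • Matrix.of fun i j =>
      Amat (m + 1) 0 j * Amat (m + 1) i (Fin.last m) - a * Amat (m + 1) i j := by
    rw [← hM.mul_left_inj, Bmat_mul_one_add_Xmat_mul_Lmat, Matrix.smul_mul, hK, smul_smul,
      Ring.inverse_mul_cancel _ ha, one_smul]
  refine ⟨ha, fun i j => ?_⟩
  rw [hB, Matrix.smul_apply, Matrix.of_apply, smul_eq_mul, mul_comm]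
end

section
/- Let λ ⊆ (n−k)^k be a partition and w_λ the corresponding Grassmannian permutation (in one-line notation: w_λ = (n+1−i_k,...,n+1−i_1, n+1−j_{n−k},...,n+1−j_1) where I(λ) = {i_1<...<i_k} and its complement is {j_1<...<j_{n−k}}). Then for any u ∈ S_n, u ≤ w_λ in the strong Bruhat order if and only if u(m) ≤ w_λ(m) for all m ∈ {1,...,k} and u(m) ≥ w_λ(m) for all m ∈ {k+1,...,n}. -/
/-- The strong Bruhat order on `S_n`, via the standard characterization:
`u ≤ w` iff for all `a, b`, `|{i ≤ a : u(i) ≤ b}| ≥ |{i ≤ a : w(i) ≤ b}|`. -/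
def bruhatLE {n : ℕ} (u w : Equiv.Perm (Fin n)) : Prop :=
  ∀ a b : Fin n,
    (Finset.univ.filter (fun i => i ≤ a ∧ w i ≤ b)).card ≤
    (Finset.univ.filter (fun i => i ≤ a ∧ u i ≤ b)).card

lemma count_le_val {n : ℕ} (v : Equiv.Perm (Fin n)) (b : Fin n) :
    (Finset.univ.filter (fun i => v i ≤ b)).card = (b : ℕ) + 1 := by
  have h1 : (Finset.univ.filter (fun i => v i ≤ b)).image v =
      Finset.univ.filter (fun j => j ≤ b) := by
    ext j
    simp only [Finset.mem_image, Finset.mem_filter, Finset.mem_univ, true_and]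
    constructor
    · rintro ⟨i, hi, rfl⟩; exact hi
    · intro hj; exact ⟨v.symm j, by simpa using hj, by simp⟩
  have h2 : Finset.univ.filter (fun j => j ≤ b) = Finset.Iic b := by
    ext j; simp
  have := Finset.card_image_of_injective
    (Finset.univ.filter (fun i => v i ≤ b)) v.injective
  rw [h1, h2] at this
  rw [← this, Fin.card_Iic]

lemma count_split {n : ℕ} (v : Equiv.Perm (Fin n)) (a b : Fin n) :
    (Finset.univ.filter (fun i => i ≤ a ∧ v i ≤ b)).card +
    (Finset.univ.filter (fun i => a < i ∧ v i ≤ b)).card = (b : ℕ) + 1 := by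
  rw [← count_le_val v b]
  rw [show (Finset.univ.filter (fun i => i ≤ a ∧ v i ≤ b)) =
      (Finset.univ.filter (fun i => v i ≤ b)).filter (fun i => i ≤ a) by
    ext i; simp [and_comm]]
  rw [show (Finset.univ.filter (fun i => a < i ∧ v i ≤ b)) =
      (Finset.univ.filter (fun i => v i ≤ b)).filter (fun i => ¬ i ≤ a) by
    ext i; simp only [Finset.mem_filter, Finset.mem_univ, true_and, not_le, and_comm]]
  exact Finset.card_filter_add_card_filter_not _

lemma bruhat_compl {n : ℕ} {u w : Equiv.Perm (Fin n)} (h : bruhatLE u w) (a b : Fin n) :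
    (Finset.univ.filter (fun i => a < i ∧ u i ≤ b)).card ≤
    (Finset.univ.filter (fun i => a < i ∧ w i ≤ b)).card := by
  have h1 := count_split u a b
  have h2 := count_split w a b
  have h3 := h a b
  omega

/-- For a Grassmannian permutation `w` (increasing on positions `1,…,k` and on positions
`k+1,…,n`) and any `u ∈ S_n`, `u ≤ w` in the strong Bruhat order if and only if
`u(m) ≤ w(m)` for all `m ≤ k` and `u(m) ≥ w(m)` for all `m > k`. -/
theorem bruhat_le_grassmannian_iff (n k : ℕ) (hk : k ≤ n) (w : Equiv.Perm (Fin n))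
    (hw1 : ∀ i j : Fin n, i < j → (j : ℕ) < k → w i < w j)
    (hw2 : ∀ i j : Fin n, i < j → k ≤ (i : ℕ) → w i < w j)
    (u : Equiv.Perm (Fin n)) :
    bruhatLE u w ↔
      ((∀ m : Fin n, (m : ℕ) < k → u m ≤ w m) ∧
       (∀ m : Fin n, k ≤ (m : ℕ) → w m ≤ u m)) := by
  constructor
  · intro h
    constructor
    · -- m < k : u m ≤ w m
      intro m hm
      have e1 : Finset.univ.filter (fun i => i ≤ m ∧ w i ≤ w m) =
          Finset.univ.filter (fun i => i ≤ m) := by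
        ext i
        simp only [Finset.mem_filter, Finset.mem_univ, true_and, and_iff_left_iff_imp]
        intro hi
        rcases lt_or_eq_of_le hi with hi' | hi'
        · exact le_of_lt (hw1 i m hi' hm)
        · rw [hi']
      have e2 : Finset.univ.filter (fun i => (i : Fin n) ≤ m) = Finset.Iic m := by
        ext i; simp
      have hcard : (Finset.univ.filter (fun i => i ≤ m ∧ w i ≤ w m)).card = (m : ℕ) + 1 := by
        rw [e1, e2, Fin.card_Iic]
      have hsub : Finset.univ.filter (fun i => i ≤ m ∧ u i ≤ w m) ⊆ Finset.Iic m := by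
        intro i hi
        simp only [Finset.mem_filter, Finset.mem_univ, true_and] at hi
        simpa using hi.1
      have hle := h m (w m)
      rw [hcard] at hle
      have hcard2 : (Finset.univ.filter (fun i => i ≤ m ∧ u i ≤ w m)).card = (m : ℕ) + 1 := by
        have := Finset.card_le_card hsub
        rw [Fin.card_Iic] at this
        omega
      have heq : Finset.univ.filter (fun i => i ≤ m ∧ u i ≤ w m) = Finset.Iic m := by
        apply Finset.eq_of_subset_of_card_le hsub
        rw [Fin.card_Iic, hcard2]
      have : m ∈ Finset.univ.filter (fun i => i ≤ m ∧ u i ≤ w m) := by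
        rw [heq]; simp
      simp only [Finset.mem_filter, Finset.mem_univ, true_and] at this
      exact this.2
    · -- k ≤ m : w m ≤ u m
      intro m hm
      by_contra hcon
      push_neg at hcon
      rcases Nat.eq_zero_or_pos (m : ℕ) with hm0 | hm0
      · -- m = 0, so k = 0, w is increasing everywhere, w m = m
        have hk0 : k = 0 := by omega
        have hw0 : w m = m := by
          have h0 : (m : ℕ) ≤ (w.symm m : ℕ) := by omega
          rcases lt_or_eq_of_le h0 with h0' | h0'
          · have := hw2 m (w.symm m) (by rwa [Fin.lt_def]) (by omega)
            simp at this
            exact absurd this (by rw [Fin.lt_def]; omega)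
          · rw [congrArg w (Fin.ext h0')]; simp
        rw [hw0] at hcon
        exact absurd hcon (by rw [Fin.lt_def]; omega)
      · -- m ≥ 1
        set a : Fin n := ⟨(m : ℕ) - 1, by omega⟩ with ha
        have key := bruhat_compl h a (u m)
        have hrhs : Finset.univ.filter (fun i => a < i ∧ w i ≤ u m) = ∅ := by
          apply Finset.filter_false_of_mem
          intro i _
          rintro ⟨hi1, hi2⟩
          have him : m ≤ i := by
            rw [Fin.lt_def] at hi1
            rw [Fin.le_def]
            simp only [ha] at hi1
            omega
          rcases lt_or_eq_of_le him with him' | him'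
          · have := hw2 m i him' hm
            exact absurd (lt_of_lt_of_le this hi2) (not_lt.mpr hcon.le)
          · rw [← him'] at hi2
            exact absurd hi2 (not_le_of_gt hcon)
        have hlhs : m ∈ Finset.univ.filter (fun i => a < i ∧ u i ≤ u m) := by
          simp only [Finset.mem_filter, Finset.mem_univ, true_and]
          exact ⟨by rw [Fin.lt_def]; simp only [ha]; omega, le_refl _⟩
        rw [hrhs] at key
        simp only [Finset.card_empty, Nat.le_zero, Finset.card_eq_zero] at key
        rw [key] at hlhs
        simp at hlhs
  · rintro ⟨h1, h2⟩ a b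
    rcases lt_or_ge (a : ℕ) k with hak | hak
    · apply Finset.card_le_card
      intro i hi
      simp only [Finset.mem_filter, Finset.mem_univ, true_and] at hi ⊢
      refine ⟨hi.1, le_trans (h1 i ?_) hi.2⟩
      rw [Fin.le_def] at hi
      omega
    · have hsub : Finset.univ.filter (fun i => a < i ∧ u i ≤ b) ⊆
          Finset.univ.filter (fun i => a < i ∧ w i ≤ b) := by
        intro i hi
        simp only [Finset.mem_filter, Finset.mem_univ, true_and] at hi ⊢
        refine ⟨hi.1, le_trans (h2 i ?_) hi.2⟩
        rcases hi with ⟨hi1, _⟩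
        rw [Fin.lt_def] at hi1
        omega
      have := Finset.card_le_card hsub
      have c1 := count_split u a b
      have c2 := count_split w a b
      omega
end

section
/- Let N_{k,n} denote the number of decorated permutations of size n with exactly k anti-exceedances, and A_{k,m} the Eulerian number counting permutations of {1,...,m} with exactly k−1 descents (equivalently, permutations of S_m with exactly k weak exceedances). Then N_{k,n} = Σ_{r=0}^{n} C(n,r) · A_{k,n−r}. -/
open Classical in
/-- `decPermCount k n` is the number `N_{k,n}` of decorated permutations of size `n`
(permutations with fixed points colored black = `true` or white = `false`; the coloring
is normalized to `true` on non-fixed points) with exactly `k` anti-exceedances, an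
anti-exceedance being an index `i` with `π⁻¹(i) > i` or a white fixed point. -/
noncomputable def decPermCount (k n : ℕ) : ℕ :=
  Fintype.card {p : Equiv.Perm (Fin n) × (Fin n → Bool) //
    (∀ i, p.1 i ≠ i → p.2 i = true) ∧
    (Finset.univ.filter
      (fun i : Fin n => i < p.1.symm i ∨ (p.1 i = i ∧ p.2 i = false))).card = k}

open Classical in
/-- The Eulerian number `A_{k,m}`: the number of permutations `w ∈ S_m` with exactly `k`
anti-exceedances, an anti-exceedance of `w` being an index `i` with `w⁻¹(i) > i` or
`w(i) = i`. -/
noncomputable def eulerian (k m : ℕ) : ℕ :=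
  Fintype.card {w : Equiv.Perm (Fin m) //
    (Finset.univ.filter (fun i : Fin m => i < w.symm i ∨ w i = i)).card = k}

namespace DecPermAux

open Finset Equiv Equiv.Perm

variable {n : ℕ}

theorem compl_iff {S : Finset (Fin n)} {π : Equiv.Perm (Fin n)} {c : Fin n → Bool}
    (hS : ∀ i, i ∈ S ↔ π i = i ∧ c i = true) (i : Fin n) :
    i ∈ (Sᶜ : Finset (Fin n)) ↔ π i ∈ (Sᶜ : Finset (Fin n)) := by
  simp only [Finset.mem_compl, hS]
  constructor
  · intro h h'
    have h1 : π i = i := π.injective h'.1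
    exact h ⟨h1, h1 ▸ h'.2⟩
  · intro h h'
    exact h (by rw [h'.1]; exact h')

theorem count_eq {S : Finset (Fin n)} {m : ℕ} (e : Fin m ≃o ↥(Sᶜ : Finset (Fin n)))
    {π : Equiv.Perm (Fin n)} {c : Fin n → Bool} (w : Equiv.Perm (Fin m))
    (hw : ∀ j, (e (w j) : Fin n) = π (e j))
    (hS : ∀ i, i ∈ S ↔ π i = i ∧ c i = true)
    {s : Finset (Fin n)} (hs : ∀ i, i ∈ s ↔ (i < π.symm i ∨ (π i = i ∧ c i = false)))
    {t : Finset (Fin m)} (ht : ∀ j, j ∈ t ↔ (j < w.symm j ∨ w j = j)) :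
    s.card = t.card := by
  have hws : ∀ j, (e (w.symm j) : Fin n) = π.symm (e j) := by
    intro j
    have h := hw (w.symm j)
    rw [w.apply_symm_apply] at h
    rw [h, Equiv.symm_apply_apply]
  have hmem : ∀ i : Fin n, i ∈ s → i ∈ (Sᶜ : Finset (Fin n)) := by
    intro i hi
    rw [hs] at hi
    rw [Finset.mem_compl, hS]
    rintro ⟨hfix, hc⟩
    rcases hi with h | h
    · have h2 : π.symm i = i := by conv_lhs => rw [← hfix, Equiv.symm_apply_apply]
      rw [h2] at h; exact lt_irrefl _ h
    · rw [h.2] at hc; exact Bool.false_ne_true hc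
  refine Finset.card_bij' (fun i hi => e.symm ⟨i, hmem i hi⟩) (fun j _ => (e j : Fin n))
    ?_ ?_ ?_ ?_
  · intro i hi
    set j := e.symm ⟨i, hmem i hi⟩ with hj
    have hej : e j = ⟨i, hmem i hi⟩ := e.apply_symm_apply _
    rw [ht]
    rw [hs] at hi
    rcases hi with h | h
    · left
      have hlt : (e j : Fin n) < (e (w.symm j) : Fin n) := by
        rw [hws, hej]; exact h
      exact e.lt_iff_lt.mp (Subtype.coe_lt_coe.mp hlt)
    · right
      apply e.injective
      apply Subtype.coe_injective
      show (e (w j) : Fin n) = (e j : Fin n)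
      rw [hw, hej]
      exact h.1
  · intro j hj
    rw [hs]
    rw [ht] at hj
    have hc : (e j : Fin n) ∈ (Sᶜ : Finset (Fin n)) := (e j).2
    rcases hj with h | h
    · left
      have hlt : (e j : Fin n) < (e (w.symm j) : Fin n) :=
        Subtype.coe_lt_coe.mpr (e.lt_iff_lt.mpr h)
      rwa [hws] at hlt
    · right
      have hfix : π (e j : Fin n) = (e j : Fin n) := by rw [← hw, h]
      refine ⟨hfix, ?_⟩
      rw [Finset.mem_compl, hS] at hc
      by_contra hcc
      exact hc ⟨hfix, by simpa using hcc⟩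
  · intro i hi
    show ((e (e.symm ⟨i, hmem i hi⟩)) : Fin n) = i
    rw [e.apply_symm_apply]
  · intro j hj
    apply e.injective
    apply Subtype.coe_injective
    show ((e (e.symm ⟨(e j : Fin n), _⟩)) : Fin n) = (e j : Fin n)
    rw [e.apply_symm_apply]

end DecPermAux

namespace DecPermAux

open Finset Equiv Equiv.Perm

def black {n : ℕ} (p : Equiv.Perm (Fin n) × (Fin n → Bool)) : Finset (Fin n) :=
  Finset.univ.filter (fun i => p.1 i = i ∧ p.2 i = true)

abbrev Fb (k n : ℕ) (S : Finset (Fin n)) :=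
  {a : {p : Equiv.Perm (Fin n) × (Fin n → Bool) //
      (∀ i, p.1 i ≠ i → p.2 i = true) ∧
      (Finset.univ.filter
        (fun i : Fin n => i < p.1.symm i ∨ (p.1 i = i ∧ p.2 i = false))).card = k} //
    black a.1 = S}

abbrev Eu (k m : ℕ) := {w : Equiv.Perm (Fin m) //
    (Finset.univ.filter (fun i : Fin m => i < w.symm i ∨ w i = i)).card = k}

theorem eulerian_eq (k m : ℕ) : eulerian k m = Fintype.card (Eu k m) := rfl

variable {n : ℕ}

noncomputable def eIso (S : Finset (Fin n)) : Fin (n - S.card) ≃o ↥(Sᶜ : Finset (Fin n)) :=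
  (Sᶜ).orderIsoOfFin (by rw [Finset.card_compl, Fintype.card_fin])

noncomputable def fwd (S : Finset (Fin n)) {π : Equiv.Perm (Fin n)}
    (hA : ∀ i, i ∈ (Sᶜ : Finset (Fin n)) ↔ π i ∈ (Sᶜ : Finset (Fin n))) :
    Equiv.Perm (Fin (n - S.card)) :=
  (eIso S).toEquiv.symm.permCongr (π.subtypePerm (fun i => (hA i).symm))

theorem fwd_spec (S : Finset (Fin n)) {π : Equiv.Perm (Fin n)}
    (hA : ∀ i, i ∈ (Sᶜ : Finset (Fin n)) ↔ π i ∈ (Sᶜ : Finset (Fin n))) (j) :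
    ((eIso S) ((fwd S hA) j) : Fin n) = π ((eIso S) j) := by
  simp [fwd, Equiv.permCongr_apply, Equiv.Perm.subtypePerm_apply]

noncomputable def bwd (S : Finset (Fin n)) (w : Equiv.Perm (Fin (n - S.card))) :
    Equiv.Perm (Fin n) :=
  Equiv.Perm.ofSubtype ((eIso S).toEquiv.permCongr w)

theorem bwd_spec (S : Finset (Fin n)) (w : Equiv.Perm (Fin (n - S.card))) (j) :
    ((eIso S) (w j) : Fin n) = bwd S w ((eIso S) j) := by
  have hmem : ((eIso S) j : Fin n) ∈ (Sᶜ : Finset (Fin n)) := ((eIso S) j).2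
  simp only [bwd]
  rw [Equiv.Perm.ofSubtype_apply_of_mem _ hmem]
  simp [Equiv.permCongr_apply]

theorem bwd_fix (S : Finset (Fin n)) (w : Equiv.Perm (Fin (n - S.card))) {i : Fin n}
    (h : i ∈ S) : bwd S w i = i := by
  simp only [bwd]
  exact Equiv.Perm.ofSubtype_apply_of_not_mem _ (by simp [h])

end DecPermAux

namespace DecPermAux

open Finset Equiv Equiv.Perm

variable {n : ℕ}

noncomputable def bcol (S : Finset (Fin n)) (w : Equiv.Perm (Fin (n - S.card))) :
    Fin n → Bool :=
  fun i => if bwd S w i = i ∧ i ∈ (Sᶜ : Finset (Fin n)) then false else true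

theorem bcol_norm (S : Finset (Fin n)) (w : Equiv.Perm (Fin (n - S.card))) (i : Fin n)
    (h : bwd S w i ≠ i) : bcol S w i = true := by
  simp only [bcol]
  rw [if_neg (fun hc => h hc.1)]

theorem bwd_S_iff (S : Finset (Fin n)) (w : Equiv.Perm (Fin (n - S.card))) (i : Fin n) :
    i ∈ S ↔ bwd S w i = i ∧ bcol S w i = true := by
  constructor
  · intro h
    refine ⟨bwd_fix S w h, ?_⟩
    simp only [bcol]
    rw [if_neg (fun hc => by simpa [h] using hc.2)]
  · rintro ⟨hfix, hc⟩
    by_contra hns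
    have hcomp : i ∈ (Sᶜ : Finset (Fin n)) := Finset.mem_compl.mpr hns
    simp only [bcol] at hc
    rw [if_pos ⟨hfix, hcomp⟩] at hc
    exact Bool.false_ne_true hc

theorem mem_S_iff {k : ℕ} {S : Finset (Fin n)} (a : Fb k n S) (i : Fin n) :
    i ∈ S ↔ a.1.1.1 i = i ∧ a.1.1.2 i = true := by
  have h : i ∈ S ↔ i ∈ black a.1.1 := by rw [a.2]
  rw [h]; simp [black]

noncomputable def F {k : ℕ} {S : Finset (Fin n)} (a : Fb k n S) : Eu k (n - S.card) :=
  ⟨fwd S (compl_iff (mem_S_iff a)),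
    ((count_eq (eIso S) (fwd S (compl_iff (mem_S_iff a)))
      (fwd_spec S (compl_iff (mem_S_iff a))) (mem_S_iff a)
      (fun i => by simp) (fun j => by simp)).symm).trans a.1.2.2⟩

end DecPermAux

namespace DecPermAux

open Finset Equiv Equiv.Perm

variable {n : ℕ}

theorem F_inj {k : ℕ} {S : Finset (Fin n)} : Function.Injective (F (k := k) (S := S)) := by
  intro a b hab
  have hw : ∀ j, fwd S (compl_iff (mem_S_iff a)) j = fwd S (compl_iff (mem_S_iff b)) j := by
    intro j
    have := congrArg Subtype.val hab
    simp only [F] at this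
    rw [this]
  have hπ : a.1.1.1 = b.1.1.1 := by
    apply Equiv.ext
    intro x
    by_cases hx : x ∈ (Sᶜ : Finset (Fin n))
    · set j := (eIso S).symm ⟨x, hx⟩ with hj
      have h1 : a.1.1.1 x = ((eIso S) (fwd S (compl_iff (mem_S_iff a)) j) : Fin n) := by
        have := fwd_spec S (compl_iff (mem_S_iff a)) j
        rw [hj, (eIso S).apply_symm_apply] at this
        exact this.symm
      have h2 : b.1.1.1 x = ((eIso S) (fwd S (compl_iff (mem_S_iff b)) j) : Fin n) := by
        have := fwd_spec S (compl_iff (mem_S_iff b)) j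
        rw [hj, (eIso S).apply_symm_apply] at this
        exact this.symm
      rw [h1, h2, hw]
    · have hxS : x ∈ S := by simpa using hx
      rw [((mem_S_iff a) x).mp hxS |>.1, ((mem_S_iff b) x).mp hxS |>.1]
  have hc : a.1.1.2 = b.1.1.2 := by
    funext i
    by_cases hiS : i ∈ S
    · rw [((mem_S_iff a) i).mp hiS |>.2, ((mem_S_iff b) i).mp hiS |>.2]
    · by_cases hfix : a.1.1.1 i = i
      · have ha' : a.1.1.2 i = false := by
          have hna := (mem_S_iff a i).not.mp hiS
          rcases Bool.eq_false_or_eq_true (a.1.1.2 i) with h | h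
          · exact absurd ⟨hfix, h⟩ hna
          · exact h
        have hb' : b.1.1.2 i = false := by
          have hnb := (mem_S_iff b i).not.mp hiS
          rcases Bool.eq_false_or_eq_true (b.1.1.2 i) with h | h
          · exact absurd ⟨hπ ▸ hfix, h⟩ hnb
          · exact h
        rw [ha', hb']
      · rw [a.1.2.1 i hfix, b.1.2.1 i (fun h => hfix (hπ ▸ h))]
  apply Subtype.ext
  apply Subtype.ext
  exact Prod.ext hπ hc

theorem F_surj {k : ℕ} {S : Finset (Fin n)} : Function.Surjective (F (k := k) (S := S)) := by
  rintro ⟨w, hk⟩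
  have hnorm : ∀ i, (bwd S w, bcol S w).1 i ≠ i → (bwd S w, bcol S w).2 i = true :=
    fun i h => bcol_norm S w i h
  have hSiff := bwd_S_iff S w
  have hw' : ∀ j, ((eIso S) (w j) : Fin n) = bwd S w ((eIso S) j) := bwd_spec S w
  have hcount : (Finset.univ.filter
      (fun i : Fin n => i < (bwd S w).symm i ∨ (bwd S w i = i ∧ bcol S w i = false))).card
      = k :=
    (count_eq (eIso S) w hw' hSiff (fun i => by simp) (fun j => by simp)).trans hk
  have hblack : black (bwd S w, bcol S w) = S := by
    ext i
    rw [black, Finset.mem_filter]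
    rw [hSiff i]
    simp
  refine ⟨⟨⟨(bwd S w, bcol S w), hnorm, hcount⟩, hblack⟩, ?_⟩
  apply Subtype.ext
  apply Equiv.ext
  intro j
  set a : Fb k n S := ⟨⟨(bwd S w, bcol S w), hnorm, hcount⟩, hblack⟩ with ha
  have h1 : ((eIso S) (fwd S (compl_iff (mem_S_iff a)) j) : Fin n)
      = bwd S w ((eIso S) j) := fwd_spec S (compl_iff (mem_S_iff a)) j
  have h2 := hw' j
  exact (eIso S).injective (Subtype.coe_injective (h1.trans h2.symm))

open Classical in
theorem card_fiber (k : ℕ) (S : Finset (Fin n)) :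
    Fintype.card (Fb k n S) = eulerian k (n - S.card) := by
  rw [eulerian_eq]
  exact Fintype.card_congr (Equiv.ofBijective F ⟨F_inj, F_surj⟩)

end DecPermAux


open DecPermAux in
/-- `N_{k,n} = Σ_{r=0}^{n} C(n,r) · A_{k,n-r}`. -/
theorem decPermCount_eq_sum_eulerian (k n : ℕ) :
    decPermCount k n = ∑ r ∈ Finset.range (n + 1), n.choose r * eulerian k (n - r) := by
  have h0 : decPermCount k n = Fintype.card {p : Equiv.Perm (Fin n) × (Fin n → Bool) //
      (∀ i, p.1 i ≠ i → p.2 i = true) ∧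
      (Finset.univ.filter
        (fun i : Fin n => i < p.1.symm i ∨ (p.1 i = i ∧ p.2 i = false))).card = k} := rfl
  rw [h0]
  rw [Fintype.card_congr
    (Equiv.sigmaFiberEquiv (fun a : {p : Equiv.Perm (Fin n) × (Fin n → Bool) //
      (∀ i, p.1 i ≠ i → p.2 i = true) ∧
      (Finset.univ.filter
        (fun i : Fin n => i < p.1.symm i ∨ (p.1 i = i ∧ p.2 i = false))).card = k}
      => black a.1)).symm]
  rw [Fintype.card_sigma]
  have h2 : ∀ S : Finset (Fin n), Fintype.card (Fb k n S) = eulerian k (n - S.card) :=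
    card_fiber k
  rw [Finset.sum_congr rfl (fun S _ => h2 S)]
  rw [show (Finset.univ : Finset (Finset (Fin n))) = (Finset.univ : Finset (Fin n)).powerset
    from (Finset.powerset_univ).symm]
  rw [Finset.sum_powerset_apply_card (fun r => eulerian k (n - r))]
  simp [Finset.card_univ, smul_eq_mul]
end

section
/- Let I_1 = {i_1 < ... < i_k} be the lexicographically minimal base of a matroid M of rank k on {1,...,n}, with i_1 = 1, and let I_2 = {j_1 < ... < j_k} be the lexicographically minimal base with respect to the shifted order 2 < 3 < ... < n < 1. If I_2 ≠ I_1, then I_2 = (I_1 \ {1}) ∪ {j} for some j ∉ I_1. -/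
/-- `B` is the lexicographically minimal member of `M` with respect to the shifted linear
order `<_r`: for any other `C ∈ M`, the `<_r`-minimal element of the symmetric difference
`B Δ C` lies in `B`. -/
def IsLexMin (n : ℕ) (r : Fin n) (M : Finset (Finset (Fin n))) (B : Finset (Fin n)) : Prop :=
  B ∈ M ∧ ∀ C ∈ M, C ≠ B → ∃ x ∈ B \ C, ∀ y ∈ C \ B, shiftVal n r x < shiftVal n r y

namespace Matroid

variable {α : Type*}

section LexMin

variable {β : Type*} [Preorder β]

def IsLexMinBase (N : Matroid α) (f : α → β) (B : Set α) : Prop :=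
  N.IsBase B ∧ ∀ C, N.IsBase C → C ≠ B → ∃ x ∈ B \ C, ∀ y ∈ C \ B, f x < f y

namespace IsLexMinBase

variable {N : Matroid α} {f : α → β} {B : Set α} {x : α}

theorem mem_closure_of_notMem (hB : N.IsLexMinBase f B) (hx : x ∈ N.E) (hxB : x ∉ B) :
    x ∈ N.closure (B ∩ {y | f y < f x}) := by
  by_contra hcl
  have hI : N.Indep (B ∩ {y | f y < f x}) := hB.1.indep.subset Set.inter_subset_left
  obtain ⟨C, hC, hxC⟩ :=
    ((hI.insert_indep_iff_of_notMem fun h => hxB h.1).2 ⟨hx, hcl⟩).exists_isBase_superset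
  have hxC' : x ∈ C := hxC (Set.mem_insert x _)
  obtain ⟨u, ⟨huB, huC⟩, hu⟩ := hB.2 C hC fun h => hxB (h ▸ hxC')
  exact huC (hxC (Set.mem_insert_of_mem x ⟨huB, hu x ⟨hxC', hxB⟩⟩))

theorem notMem_closure_of_mem (hB : N.IsLexMinBase f B) (hxB : x ∈ B) :
    x ∉ N.closure {y | f y < f x} := by
  set I := B ∩ {y | f y < f x}
  have hspan : {y | f y < f x} ∩ N.E ⊆ N.closure I := by
    rintro y ⟨hyx, hy⟩
    by_cases hyB : y ∈ B
    · exact N.mem_closure_of_mem' ⟨hyB, hyx⟩ hy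
    · refine N.closure_subset_closure ?_ (hB.mem_closure_of_notMem hy hyB)
      exact Set.inter_subset_inter_right B fun z hz => lt_trans hz hyx
  have hIx : I ⊆ B \ {x} := fun y ⟨hyB, hyx⟩ => ⟨hyB, fun h => lt_irrefl (f x) (h ▸ hyx)⟩
  rw [← N.closure_inter_ground]
  exact fun h => hB.1.indep.notMem_closure_sdiff_of_mem hxB
    (N.closure_subset_closure hIx (N.closure_subset_closure_of_subset_closure hspan h))

theorem mem_iff_notMem_closure (hB : N.IsLexMinBase f B) (hx : x ∈ N.E) :
    x ∈ B ↔ x ∉ N.closure {y | f y < f x} :=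
  ⟨hB.notMem_closure_of_mem, fun h => by_contra fun hxB =>
    h (N.closure_subset_closure Set.inter_subset_right (hB.mem_closure_of_notMem hx hxB))⟩

end IsLexMinBase

end LexMin

section FinsetBases

variable [DecidableEq α] {k : ℕ} {M : Finset (Finset α)}

theorem exchangeProperty_of_card_eq (hcard : ∀ B ∈ M, B.card = k)
    (hex : ∀ I ∈ M, ∀ J ∈ M, ∀ i ∈ I, ∃ j ∈ J, insert j (I.erase i) ∈ M) :
    ExchangeProperty (fun X : Set α => ∃ B ∈ M, (B : Set α) = X) := by
  rintro _ _ ⟨B, hB, rfl⟩ ⟨B', hB', rfl⟩ a ⟨haB, haB'⟩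
  obtain ⟨b, hbB', hbM⟩ := hex B hB B' hB' a haB
  have hbB : b ∉ B := by
    intro hbB
    have hb : b ∈ B.erase a := Finset.mem_erase.2 ⟨fun h => haB' (h ▸ hbB'), hbB⟩
    have := hcard _ hbM
    rw [Finset.insert_eq_of_mem hb, ← hcard B hB] at this
    exact (Finset.card_erase_lt_of_mem haB).ne this
  exact ⟨b, ⟨hbB', hbB⟩, _, hbM, by simp⟩

def ofFinsetBases (M : Finset (Finset α)) (hne : M.Nonempty) (hcard : ∀ B ∈ M, B.card = k)
    (hex : ∀ I ∈ M, ∀ J ∈ M, ∀ i ∈ I, ∃ j ∈ J, insert j (I.erase i) ∈ M) : Matroid α :=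
  Matroid.ofExistsFiniteIsBase Set.univ (fun X => ∃ B ∈ M, (B : Set α) = X)
    (let ⟨B, hB⟩ := hne; ⟨B, ⟨B, hB, rfl⟩, B.finite_toSet⟩)
    (exchangeProperty_of_card_eq hcard hex) fun _ _ => Set.subset_univ _

end FinsetBases

end Matroid

theorem Finset.exists_notMem_eq_insert_erase {α : Type*} [DecidableEq α] {s t : Finset α} {a : α}
    (ha : a ∈ s) (hst : s.erase a ⊆ t) (hcard : t.card = s.card) (hne : t ≠ s) :
    ∃ j ∉ s, t = insert j (s.erase a) := by
  obtain ⟨j, hj, rfl⟩ := Finset.exists_eq_insert_iff.2 ⟨hst, (card_erase_add_one ha).trans hcard.symm⟩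
  refine ⟨j, fun hjs => hj (mem_erase.2 ⟨?_, hjs⟩), rfl⟩
  rintro rfl
  exact hne (insert_erase ha)

theorem shiftVal_zero {n : ℕ} [NeZero n] (i : Fin n) : shiftVal n 0 i = i := by
  simp [shiftVal, Nat.mod_eq_of_lt i.isLt]

theorem shiftVal_one_of_ne_zero {n : ℕ} [NeZero n] {i : Fin n} (hi : i ≠ 0) :
    shiftVal n 1 i = i - 1 := by
  have hi' : 1 ≤ (i : ℕ) := Nat.one_le_iff_ne_zero.2 (Fin.val_ne_zero_iff.2 hi)
  have hn : 1 < n := lt_of_le_of_lt hi' i.isLt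
  rw [shiftVal, Fin.val_one', Nat.mod_eq_of_lt hn, show (i : ℕ) + n - 1 = i - 1 + n by omega,
    Nat.add_mod_right, Nat.mod_eq_of_lt (by omega)]

theorem shiftVal_zero_lt_of_shiftVal_one_lt {n : ℕ} [NeZero n] {y z : Fin n} (hz : z ≠ 0)
    (h : shiftVal n 1 y < shiftVal n 1 z) : shiftVal n 0 y < shiftVal n 0 z := by
  rw [shiftVal_zero, shiftVal_zero]
  rw [shiftVal_one_of_ne_zero hz] at h
  by_cases hy : y = 0
  · subst hy; exact Fin.pos_iff_ne_zero.2 hz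
  · rw [shiftVal_one_of_ne_zero hy] at h
    have := Fin.val_ne_zero_iff.2 hy
    omega

theorem IsLexMin.isLexMinBase {n k : ℕ} {r : Fin n} {M : Finset (Finset (Fin n))}
    (hne : M.Nonempty) (hcard : ∀ B ∈ M, B.card = k)
    (hex : ∀ I ∈ M, ∀ J ∈ M, ∀ i ∈ I, ∃ j ∈ J, insert j (I.erase i) ∈ M)
    {B : Finset (Fin n)} (hB : IsLexMin n r M B) :
    (Matroid.ofFinsetBases M hne hcard hex).IsLexMinBase (shiftVal n r) (B : Set (Fin n)) := by
  refine ⟨⟨B, hB.1, rfl⟩, ?_⟩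
  rintro _ ⟨C, hC, rfl⟩ hCB
  obtain ⟨x, hx, hmin⟩ := hB.2 C hC fun h => hCB (congrArg _ h)
  exact ⟨x, by simpa using hx, fun y hy => hmin y (by simpa using hy)⟩

/-- Let `I₁` be the lexicographically minimal base of a rank-`k` matroid `M` on `Fin n`
(standard order, starting at `0`), with `0 ∈ I₁`, and let `I₂` be the lexicographically
minimal base with respect to the shifted order starting at `1`.  If `I₂ ≠ I₁` then
`I₂ = (I₁ \ {0}) ∪ {j}` for some `j ∉ I₁`. -/
theorem lexmin_base_shift (n k : ℕ) [NeZero n] (M : Finset (Finset (Fin n)))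
    (hne : M.Nonempty) (hcard : ∀ B ∈ M, B.card = k)
    (hex : ∀ I ∈ M, ∀ J ∈ M, ∀ i ∈ I, ∃ j ∈ J, insert j (I.erase i) ∈ M)
    (I₁ I₂ : Finset (Fin n))
    (h1 : IsLexMin n 0 M I₁) (h2 : IsLexMin n 1 M I₂)
    (h0 : (0 : Fin n) ∈ I₁) (h12 : I₂ ≠ I₁) :
    ∃ j : Fin n, j ∉ I₁ ∧ I₂ = insert j (I₁.erase 0) := by
  set N := Matroid.ofFinsetBases M hne hcard hex
  have hB₁ := h1.isLexMinBase hne hcard hex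
  have hB₂ := h2.isLexMinBase hne hcard hex
  have hsub : I₁.erase 0 ⊆ I₂ := by
    intro z hz
    obtain ⟨hz0, hzI₁⟩ := Finset.mem_erase.1 hz
    have hzE : z ∈ N.E := Set.mem_univ z
    refine (hB₂.mem_iff_notMem_closure hzE).2 fun hcl => (hB₁.mem_iff_notMem_closure hzE).1 hzI₁ ?_
    exact N.closure_subset_closure (fun y => shiftVal_zero_lt_of_shiftVal_one_lt hz0) hcl
  exact Finset.exists_notMem_eq_insert_erase h0 hsub
    ((hcard _ h2.1).trans (hcard _ h1.1).symm) h12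
end

section
/- Let A be a k×n real matrix in echelon form with pivot columns {1,...,d} ⊆ I (d maximal), whose (d+1)-st column is ((−1)^{d−1}x_1, ..., x_{d−2}, −x_{d−1}, x_d, 0,...,0)^T. Then for each i ∈ {1,...,d}, the maximal minor Δ_{(I \ {i}) ∪ {d+1}}(A) equals x_i. Consequently, if all maximal minors of A are nonnegative, then x_i ≥ 0 for i = 1,...,d. -/
/-- The maximal minor of a `k × n` matrix `A` in the column set `I` (defined to be `0`
if `I` does not have exactly `k` elements). -/
noncomputable def pminor {k n : ℕ} (A : Matrix (Fin k) (Fin n) ℝ) (I : Finset (Fin n)) : ℝ :=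
  if h : I.card = k then (A.submatrix id (fun j => ((I.orderIsoOfFin h j : Fin n)))).det else 0

private lemma strictMono_fin_le {k n : ℕ} {f : Fin k → Fin n} (hf : StrictMono f) :
    ∀ m : ℕ, ∀ b : Fin k, (b : ℕ) = m → m ≤ (f b : ℕ) := by
  intro m
  induction m with
  | zero => intro b _; omega
  | succ m ih =>
    intro b hb
    have hbk := b.isLt
    have hm : m < k := by omega
    have h1 := ih ⟨m, hm⟩ rfl
    have h2 : f ⟨m, hm⟩ < f b := hf (by simp [Fin.lt_def]; omega)
    rw [Fin.lt_def] at h2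
    omega

/-- Let `A` be a `k × n` real matrix in `I`-echelon form whose pivot columns include
`{1,…,d}` (0-based: columns `0,…,d-1`), with `d` maximal (column `d+1`, 0-based `d`,
is not a pivot), and whose column `d+1` is `((-1)^{d-1} x_1, …, -x_{d-1}, x_d, 0, …, 0)ᵀ`.
Then `Δ_{(I \ {i}) ∪ {d+1}}(A) = x_i` for `i = 1,…,d`; consequently, if all maximal
minors of `A` are nonnegative then `x_i ≥ 0` for `i = 1,…,d`. -/
theorem echelon_minor_entries (k n : ℕ) (A : Matrix (Fin k) (Fin n) ℝ)
    (I : Finset (Fin n)) (hI : I.card = k)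
    (d : ℕ) (hdn : d < n) (hdk : d ≤ k)
    (hsub : ∀ j : Fin n, (j : ℕ) < d → j ∈ I)
    (hnot : (⟨d, hdn⟩ : Fin n) ∉ I)
    (hid : ∀ a b : Fin k, A a ((I.orderIsoOfFin hI b : Fin n)) = if a = b then 1 else 0)
    (hech : ∀ (a : Fin k) (j : Fin n), j < (I.orderIsoOfFin hI a : Fin n) → A a j = 0)
    (x : ℕ → ℝ)
    (hcol : ∀ a : Fin k, A a ⟨d, hdn⟩ =
      if (a : ℕ) < d then (-1 : ℝ) ^ (d - 1 - (a : ℕ)) * x ((a : ℕ) + 1) else 0) :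
    (∀ j : Fin n, (j : ℕ) < d →
      pminor A (insert (⟨d, hdn⟩ : Fin n) (I.erase j)) = x ((j : ℕ) + 1)) ∧
    ((∀ J : Finset (Fin n), J.card = k → 0 ≤ pminor A J) →
      ∀ i : ℕ, 1 ≤ i → i ≤ d → 0 ≤ x i) := by
  have key : ∀ j : Fin n, (j : ℕ) < d →
      pminor A (insert (⟨d, hdn⟩ : Fin n) (I.erase j)) = x ((j : ℕ) + 1) := by
    intro j hjd
    obtain ⟨k, rfl⟩ : ∃ k', k = k' + 1 := ⟨k - 1, by omega⟩
    set fI : Fin (k + 1) → Fin n := fun b => I.orderEmbOfFin hI b with hfI_def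
    have hle : ∀ b : Fin (k + 1), (b : ℕ) ≤ (fI b : ℕ) :=
      fun b => strictMono_fin_le (I.orderEmbOfFin hI).strictMono (b : ℕ) b rfl
    have hA : ∀ b : Fin (k + 1), (b : ℕ) < d → (fI b : ℕ) = (b : ℕ) := by
      have hmem : ∀ b : Fin (k + 1),
          (if h : (b : ℕ) < d then (⟨(b : ℕ), h.trans hdn⟩ : Fin n) else fI b) ∈ I := by
        intro b
        split_ifs with h
        · exact hsub _ h
        · exact I.orderEmbOfFin_mem hI b
      have hmono : StrictMono (fun b : Fin (k + 1) =>
          if h : (b : ℕ) < d then (⟨(b : ℕ), h.trans hdn⟩ : Fin n) else fI b) := by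
        intro b1 b2 hb
        have hb' : (b1 : ℕ) < (b2 : ℕ) := hb
        have h12 : (fI b1 : ℕ) < (fI b2 : ℕ) := (I.orderEmbOfFin hI).strictMono hb
        have hl1 := hle b1
        have hl2 := hle b2
        simp only [Fin.lt_def]
        split_ifs <;> simp <;> omega
      have := Finset.orderEmbOfFin_unique hI hmem hmono
      intro b hb
      have := congrFun this b
      rw [dif_pos hb] at this
      exact congrArg Fin.val this.symm
    have hB : ∀ b : Fin (k + 1), d ≤ (b : ℕ) → d < (fI b : ℕ) := by
      intro b hb
      have h1 := hle b
      have h2 : fI b ∈ I := I.orderEmbOfFin_mem hI b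
      have h3 : (fI b : ℕ) ≠ d := by
        intro h
        exact hnot (by rwa [show (⟨d, hdn⟩ : Fin n) = fI b from Fin.ext h.symm])
      omega
    set J := insert (⟨d, hdn⟩ : Fin n) (I.erase j) with hJ_def
    have hjI : j ∈ I := hsub j hjd
    have hJcard : J.card = k + 1 := by
      rw [hJ_def, Finset.card_insert_of_notMem (fun h => hnot (Finset.mem_of_mem_erase h)),
        Finset.card_erase_of_mem hjI, hI]
      omega
    set gJ : Fin (k + 1) → Fin n := fun c =>
      if _ : (c : ℕ) < (j : ℕ) then ⟨(c : ℕ), by omega⟩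
      else if _ : (c : ℕ) < d then ⟨(c : ℕ) + 1, by omega⟩
      else fI c with hgJ_def
    have hgJmem : ∀ c, gJ c ∈ J := by
      intro c
      simp only [hgJ_def]
      split_ifs with h h2
      · exact Finset.mem_insert_of_mem (Finset.mem_erase.2
          ⟨by simp [Fin.ext_iff]; omega, hsub _ (by simpa using h.trans hjd)⟩)
      · by_cases hcd : (c : ℕ) + 1 = d
        · exact Finset.mem_insert.2 (Or.inl (Fin.ext (by simpa using hcd)))
        · exact Finset.mem_insert_of_mem (Finset.mem_erase.2
            ⟨by simp [Fin.ext_iff]; omega, hsub _ (by simp; omega)⟩)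
      · have hBc := hB c (by omega)
        exact Finset.mem_insert_of_mem (Finset.mem_erase.2
          ⟨by simp [Fin.ext_iff]; omega, I.orderEmbOfFin_mem hI c⟩)
    have hgJmono : StrictMono gJ := by
      intro c1 c2 hcc
      have hcc' : (c1 : ℕ) < (c2 : ℕ) := hcc
      have h12 : (fI c1 : ℕ) < (fI c2 : ℕ) := (I.orderEmbOfFin hI).strictMono hcc
      have hB1 : (c1 : ℕ) < d ∨ d < (fI c1 : ℕ) := by
        rcases lt_or_ge (c1 : ℕ) d with h | h
        exacts [Or.inl h, Or.inr (hB c1 h)]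
      have hB2 : (c2 : ℕ) < d ∨ d < (fI c2 : ℕ) := by
        rcases lt_or_ge (c2 : ℕ) d with h | h
        exacts [Or.inl h, Or.inr (hB c2 h)]
      simp only [hgJ_def]
      split_ifs <;> simp only [Fin.lt_def] <;>
        rcases hB1 with hB1 | hB1 <;> rcases hB2 with hB2 | hB2 <;> omega
    have hgJ : ∀ c, (J.orderEmbOfFin hJcard) c = gJ c :=
      fun c => (congrFun (Finset.orderEmbOfFin_unique hJcard hgJmem hgJmono) c).symm
    set jK : Fin (k + 1) := ⟨(j : ℕ), by omega⟩ with hjK_def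
    set mF : Fin (k + 1) := ⟨d - 1 - (j : ℕ), by omega⟩ with hmF_def
    have hjKv : (jK : ℕ) = (j : ℕ) := rfl
    have hmFv : (mF : ℕ) = d - 1 - (j : ℕ) := rfl
    set τ : Equiv.Perm (Fin (k + 1)) := Equiv.addLeft jK * mF.cycleRange * (Equiv.addLeft jK)⁻¹
      with hτ_def
    have hinv : ((Equiv.addLeft jK)⁻¹ : Equiv.Perm (Fin (k + 1))) = Equiv.addLeft (-jK) := by
      simp [Equiv.Perm.inv_def]
    have hy : ∀ c : Fin (k + 1), ((-jK + c : Fin (k + 1)) : ℕ) =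
        if (j : ℕ) ≤ (c : ℕ) then (c : ℕ) - (j : ℕ) else (c : ℕ) + (k + 1) - (j : ℕ) := by
      intro c
      have hc := c.isLt
      rw [neg_add_eq_sub, Fin.sub_def]
      show ((k + 1) - (jK : ℕ) + (c : ℕ)) % (k + 1) = _
      rw [hjKv]
      split_ifs with h
      · rw [show (k + 1) - (j : ℕ) + (c : ℕ) = (k + 1) + ((c : ℕ) - (j : ℕ)) from by omega,
          Nat.add_mod_left, Nat.mod_eq_of_lt (by omega)]
      · rw [Nat.mod_eq_of_lt (by omega)]
        omega
    have hτval : ∀ c : Fin (k + 1), (τ c : ℕ) =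
        if (c : ℕ) < (j : ℕ) ∨ d ≤ (c : ℕ) then (c : ℕ)
        else if (c : ℕ) < d - 1 then (c : ℕ) + 1 else (j : ℕ) := by
      intro c
      have hc := c.isLt
      rw [hτ_def]
      simp only [Equiv.Perm.coe_mul, Function.comp_apply, hinv, Equiv.coe_addLeft]
      by_cases h1 : (c : ℕ) < (j : ℕ) ∨ d ≤ (c : ℕ)
      · rw [if_pos h1]
        have hygt : mF < -jK + c := by
          rw [Fin.lt_def, hy c, hmFv]
          rcases h1 with h1 | h1
          · rw [if_neg (by omega)]; omega
          · rw [if_pos (by omega)]; omega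
        rw [Fin.cycleRange_of_gt hygt, Fin.val_add, hjKv, hy c]
        rcases h1 with h1 | h1
        · rw [if_neg (by omega),
            show (j : ℕ) + ((c : ℕ) + (k + 1) - (j : ℕ)) = (k + 1) + (c : ℕ) from by omega,
            Nat.add_mod_left, Nat.mod_eq_of_lt hc]
        · rw [if_pos (by omega),
            show (j : ℕ) + ((c : ℕ) - (j : ℕ)) = (c : ℕ) from by omega,
            Nat.mod_eq_of_lt hc]
      · rw [if_neg h1]
        push_neg at h1
        obtain ⟨h1a, h1b⟩ := h1
        by_cases h2 : (c : ℕ) < d - 1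
        · rw [if_pos h2]
          have hylt : -jK + c < mF := by
            rw [Fin.lt_def, hy c, hmFv, if_pos (by omega)]; omega
          have hylast : (-jK + c : Fin (k + 1)) < Fin.last k := by
            rw [Fin.lt_def, hy c, if_pos (by omega)]
            simp only [Fin.val_last]
            omega
          rw [Fin.cycleRange_of_lt hylt, Fin.val_add, hjKv, Fin.val_add_one_of_lt hylast,
            hy c, if_pos (by omega),
            show (j : ℕ) + ((c : ℕ) - (j : ℕ) + 1) = (c : ℕ) + 1 from by omega,
            Nat.mod_eq_of_lt (by omega)]
        · rw [if_neg h2]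
          have hym : (-jK + c : Fin (k + 1)) = mF := by
            rw [Fin.ext_iff, hy c, hmFv, if_pos (by omega)]; omega
          rw [hym, Fin.cycleRange_self, add_zero, hjKv]
    have hτsign : (Equiv.Perm.sign τ : ℤ) = (-1) ^ (d - 1 - (j : ℕ)) := by
      rw [hτ_def]
      rw [map_mul, map_mul, map_inv]
      rw [mul_comm (Equiv.Perm.sign (Equiv.addLeft jK)) (Equiv.Perm.sign mF.cycleRange),
        mul_assoc, mul_inv_cancel, mul_one, Fin.sign_cycleRange, hmFv]
      push_cast
      ring
    set v : Fin (k + 1) → ℝ := fun a => A a ⟨d, hdn⟩ with hv_def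
    set N : Matrix (Fin (k + 1)) (Fin (k + 1)) ℝ :=
      (1 : Matrix (Fin (k + 1)) (Fin (k + 1)) ℝ).updateCol jK v with hN_def
    have hjKne : ∀ c : Fin (k + 1), (c : ℕ) ≠ (j : ℕ) → c ≠ jK := by
      intro c h hc
      exact h (by rw [hc])
    have hsubm : (A.submatrix id fun c => ((J.orderIsoOfFin hJcard c : Fin n)))
        = N.submatrix id τ := by
      ext a c
      have hc := c.isLt
      simp only [Matrix.submatrix_apply, id_eq, Finset.coe_orderIsoOfFin_apply, hgJ c]
      simp only [hgJ_def, hN_def, Matrix.updateCol_apply]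
      by_cases h1 : (c : ℕ) < (j : ℕ)
      · rw [dif_pos h1]
        have hτc : τ c = c := Fin.ext (by rw [hτval c, if_pos (Or.inl h1)])
        rw [hτc, if_neg (hjKne c (by omega)), Matrix.one_apply,
          show (⟨(c : ℕ), by omega⟩ : Fin n) = fI c from Fin.ext (hA c (by omega)).symm]
        exact hid a c
      · rw [dif_neg h1]
        by_cases h2 : (c : ℕ) < d
        · rw [dif_pos h2]
          by_cases h3 : (c : ℕ) < d - 1
          · have hck : (c : ℕ) + 1 < k + 1 := by omega
            set c1 : Fin (k + 1) := ⟨(c : ℕ) + 1, hck⟩ with hc1_def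
            have hτc : τ c = c1 := Fin.ext (by
              rw [hτval c, if_neg (by omega), if_pos h3])
            rw [hτc, if_neg (hjKne c1 (by simp [hc1_def]; omega)), Matrix.one_apply,
              show (⟨(c : ℕ) + 1, by omega⟩ : Fin n) = fI c1 from
                Fin.ext (hA c1 (by simp [hc1_def]; omega)).symm]
            exact hid a c1
          · have hτc : τ c = jK := Fin.ext (by
              rw [hτval c, if_neg (by omega), if_neg h3, hjKv])
            rw [hτc, if_pos rfl, hv_def]
            have : (⟨(c : ℕ) + 1, by omega⟩ : Fin n) = ⟨d, hdn⟩ := Fin.ext (by simp; omega)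
            rw [this]
        · rw [dif_neg h2]
          have hτc : τ c = c := Fin.ext (by rw [hτval c, if_pos (Or.inr (by omega))])
          rw [hτc, if_neg (hjKne c (by omega)), Matrix.one_apply]
          exact hid a c
    have hNdet : N.det = v jK := by
      rw [hN_def, ← Matrix.cramer_apply, Matrix.cramer_one]
      simp
    have hsr : ((Equiv.Perm.sign τ : ℤ) : ℝ) = (-1) ^ (d - 1 - (j : ℕ)) := by
      rw [hτsign]; push_cast; ring
    show pminor A J = x ((j : ℕ) + 1)
    rw [pminor, dif_pos hJcard, hsubm, Matrix.det_permute', hNdet, hsr, hv_def]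
    simp only []
    rw [hcol jK, if_pos (show (jK : ℕ) < d from by rw [hjKv]; omega), hjKv,
      ← mul_assoc, ← pow_add]
    rw [Even.neg_one_pow ⟨d - 1 - (j : ℕ), rfl⟩, one_mul]
  refine ⟨key, fun hpos i h1 hd => ?_⟩
  have hin : i - 1 < n := by omega
  have hkey := key ⟨i - 1, hin⟩ (by simp; omega)
  have hjI : (⟨i - 1, hin⟩ : Fin n) ∈ I := hsub _ (by simp; omega)
  have hJcard : (insert (⟨d, hdn⟩ : Fin n) (I.erase ⟨i - 1, hin⟩)).card = k := by
    rw [Finset.card_insert_of_notMem (fun h => hnot (Finset.mem_of_mem_erase h)),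
      Finset.card_erase_of_mem hjI, hI]
    omega
  have := hpos _ hJcard
  rw [hkey] at this
  simpa [show i - 1 + 1 = i from by omega] using this
end
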